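/- arXiv:2007.10194 — 2 statements merged into one kernel-verified Lean document; each statement's English description precedes it below -/
import Mathlib

section
/- Let f : ℝ≥0 → ℝ≥0 be a non-increasing, right-continuous function with lim_{s→∞} f(s) = 0, and let η : ℝ≥0 → ℝ≥0 be non-decreasing with ∫₀¹ η(t)/t dt < ∞. Suppose that for all t ∈ [0,1] and all s > 0 one has t·f(s+t) ≤ f(s)·η(f(s)). If s₀ ≥ 0 satisfies η(f(s₀)) ≤ 1/e, then f(s) = 0 for every s ≥ s₀ + e·∫₀^{e·f(s₀)} η(t)/t dt. -/
/-! Put `c = f s₀` and `G x = ∫₀ˣ η(t)/t dt`. If `f σ ≤ r` with `η r ≤ 1/e`, the inequality with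
`t = e η(r) ≤ 1` gives `f (σ + e η(r)) ≤ r / e`. Starting from `r = c` and iterating, `f` drops
below `c / eⁿ` after time `s₀ + e Σ_{k<n} η(c / eᵏ)`, and since `η r ≤ ∫_r^{er} η(t)/t dt` by
monotonicity of `η`, this time is at most `s₀ + e G (e c)`. Right continuity handles steps with
`η r = 0` and extends the inequality to `s = 0`. -/

open MeasureTheory Set Filter

noncomputable def diniIntegral (η : ℝ → ℝ) (x : ℝ) : ℝ := ∫ t in Ioc (0:ℝ) x, η t / t

section Dini

variable {η : ℝ → ℝ}

theorem integrableOn_div_Ioc_of_dini (hηmono : MonotoneOn η (Ici 0))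
    (hDini : IntegrableOn (fun t => η t / t) (Ioc (0:ℝ) 1)) (M : ℝ) :
    IntegrableOn (fun t => η t / t) (Ioc (0:ℝ) M) := by
  have hη : IntegrableOn η (Icc 1 M) :=
    (hηmono.mono fun t ht => zero_le_one.trans ht.1).integrableOn_isCompact isCompact_Icc
  have htail : IntegrableOn (fun t => η t / t) (Icc 1 M) := by
    simp only [div_eq_mul_inv]
    exact hη.mul_continuousOn
      (continuousOn_inv₀.mono fun t ht => (zero_lt_one.trans_le ht.1).ne') isCompact_Icc
  exact (hDini.union htail).mono_set Ioc_subset_Ioc_union_Icc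

theorem diniIntegral_nonneg (hη0 : ∀ t, 0 ≤ η t) (x : ℝ) : 0 ≤ diniIntegral η x :=
  setIntegral_nonneg measurableSet_Ioc fun t ht => div_nonneg (hη0 t) ht.1.le

theorem le_diniIntegral_exp_mul_sub (hηmono : MonotoneOn η (Ici 0))
    (hDini : IntegrableOn (fun t => η t / t) (Ioc (0:ℝ) 1)) {x : ℝ} (hx : 0 < x) :
    η x ≤ diniIntegral η (Real.exp 1 * x) - diniIntegral η x := by
  have hxe : x ≤ Real.exp 1 * x := le_mul_of_one_le_left hx.le (Real.one_le_exp zero_le_one)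
  have hint := integrableOn_div_Ioc_of_dini hηmono hDini (Real.exp 1 * x)
  have hsplit : diniIntegral η (Real.exp 1 * x) - diniIntegral η x
      = ∫ t in Ioc x (Real.exp 1 * x), η t / t := by
    rw [diniIntegral, diniIntegral, ← Ioc_union_Ioc_eq_Ioc hx.le hxe,
      setIntegral_union (Ioc_disjoint_Ioc_of_le le_rfl) measurableSet_Ioc
        (hint.mono_set (Ioc_subset_Ioc le_rfl hxe)) (hint.mono_set (Ioc_subset_Ioc hx.le le_rfl)),
      add_sub_cancel_left]
  have hlog : ∫ t in Ioc x (Real.exp 1 * x), η x * t⁻¹ = η x := by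
    rw [← intervalIntegral.integral_of_le hxe, intervalIntegral.integral_const_mul,
      integral_inv (notMem_uIcc_of_lt hx (by positivity)), mul_div_cancel_right₀ _ hx.ne',
      Real.log_exp, mul_one]
  have hx_inv : IntegrableOn (fun t => η x * t⁻¹) (Ioc x (Real.exp 1 * x)) :=
    (continuousOn_const.mul (continuousOn_inv₀.mono fun t ht => (hx.trans_le ht.1).ne')
      |>.integrableOn_Icc).mono_set Ioc_subset_Icc_self
  rw [hsplit, ← hlog]
  refine setIntegral_mono_on hx_inv (hint.mono_set (Ioc_subset_Ioc hx.le le_rfl))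
    measurableSet_Ioc fun t ht => ?_
  rw [div_eq_mul_inv]
  exact mul_le_mul_of_nonneg_right (hηmono hx.le (hx.le.trans ht.1.le) ht.1.le)
    (inv_nonneg.2 (hx.trans ht.1).le)

end Dini

section Iteration

variable {f η : ℝ → ℝ}

theorem mul_apply_add_le_of_nonneg (hf0 : ∀ s, 0 ≤ f s) (hη0 : ∀ t, 0 ≤ η t)
    (hfmono : AntitoneOn f (Ici 0)) (hfrc : ∀ s ∈ Ici (0:ℝ), ContinuousWithinAt f (Ici s) s)
    (hηmono : MonotoneOn η (Ici 0))
    (hineq : ∀ t ∈ Icc (0:ℝ) 1, ∀ s > (0:ℝ), t * f (s + t) ≤ f s * η (f s))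
    {t : ℝ} (ht : t ∈ Icc (0:ℝ) 1) {s : ℝ} (hs : 0 ≤ s) :
    t * f (s + t) ≤ f s * η (f s) := by
  rcases hs.lt_or_eq with hs | rfl
  · exact hineq t ht s hs
  rcases ht.1.lt_or_eq with ht0 | rfl
  · have hcont : ContinuousWithinAt (fun u => f (u + t)) (Ioi 0) 0 :=
      (ContinuousWithinAt.comp (f := fun u => u + t) (by rw [zero_add]; exact hfrc t ht0.le)
        (continuous_add_const t).continuousWithinAt
        fun u hu => by simp only [mem_Ici]; linarith [mem_Ioi.1 hu])
    refine le_of_tendsto (hcont.tendsto.const_mul t) ?_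
    filter_upwards [self_mem_nhdsWithin] with u hu
    have hfu : f u ≤ f 0 := hfmono self_mem_Ici (mem_Ici.2 hu.le) hu.le
    exact (hineq t ht u hu).trans
      (mul_le_mul hfu (hηmono (hf0 u) (hf0 0) hfu) (hη0 _) (hf0 0))
  · simpa using mul_nonneg (hf0 0) (hη0 (f 0))

theorem apply_add_exp_mul_le (hf0 : ∀ s, 0 ≤ f s) (hη0 : ∀ t, 0 ≤ η t)
    (hfrc : ∀ s ∈ Ici (0:ℝ), ContinuousWithinAt f (Ici s) s) (hηmono : MonotoneOn η (Ici 0))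
    (hineq : ∀ t ∈ Icc (0:ℝ) 1, ∀ s ≥ (0:ℝ), t * f (s + t) ≤ f s * η (f s))
    {σ x : ℝ} (hσ : 0 ≤ σ) (hfx : f σ ≤ x) (hηx : η x ≤ 1 / Real.exp 1) :
    f (σ + Real.exp 1 * η x) ≤ x / Real.exp 1 := by
  have he := Real.exp_pos 1
  have hprod : f σ * η (f σ) ≤ x * η x :=
    mul_le_mul hfx (hηmono (hf0 σ) ((hf0 σ).trans hfx) hfx) (hη0 _) ((hf0 σ).trans hfx)
  have hbound : ∀ t, 0 < t → Real.exp 1 * η x ≤ t → t ≤ 1 → f (σ + t) ≤ x / Real.exp 1 := by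
    intro t ht hlow hup
    rw [le_div_iff₀ he]
    refine le_of_mul_le_mul_left ?_ ht
    calc t * (f (σ + t) * Real.exp 1) = (t * f (σ + t)) * Real.exp 1 := by ring
      _ ≤ x * η x * Real.exp 1 :=
        mul_le_mul_of_nonneg_right ((hineq t ⟨ht.le, hup⟩ σ hσ).trans hprod) he.le
      _ = x * (Real.exp 1 * η x) := by ring
      _ ≤ t * x := by rw [mul_comm t]; exact mul_le_mul_of_nonneg_left hlow ((hf0 σ).trans hfx)
  rcases (hη0 x).eq_or_lt with hzero | hpos
  · -- a step of length zero: the bound on `(σ, σ + 1)` reaches `σ` by right continuity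
    rw [← hzero, mul_zero, add_zero]
    refine le_of_tendsto ((hfrc σ hσ).mono Ioi_subset_Ici_self) ?_
    filter_upwards [Ioo_mem_nhdsGT (lt_add_one σ)] with u hu
    have hu₀ : 0 < u - σ := sub_pos.2 hu.1
    simpa using hbound (u - σ) hu₀ (by rw [← hzero, mul_zero]; exact hu₀.le) (by linarith [hu.2])
  · refine hbound _ (by positivity) le_rfl ?_
    calc Real.exp 1 * η x ≤ Real.exp 1 * (1 / Real.exp 1) := mul_le_mul_of_nonneg_left hηx he.le
      _ = 1 := by field_simp

theorem apply_add_diniIntegral_le (hf0 : ∀ s, 0 ≤ f s) (hη0 : ∀ t, 0 ≤ η t)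
    (hfmono : AntitoneOn f (Ici 0)) (hfrc : ∀ s ∈ Ici (0:ℝ), ContinuousWithinAt f (Ici s) s)
    (hηmono : MonotoneOn η (Ici 0)) (hDini : IntegrableOn (fun t => η t / t) (Ioc (0:ℝ) 1))
    (hineq : ∀ t ∈ Icc (0:ℝ) 1, ∀ s ≥ (0:ℝ), t * f (s + t) ≤ f s * η (f s))
    {σ x : ℝ} (hσ : 0 ≤ σ) (hx : 0 < x) (hfx : f σ ≤ x) (hηx : η x ≤ 1 / Real.exp 1) :
    f (σ + Real.exp 1 * (diniIntegral η (Real.exp 1 * x) - diniIntegral η x))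
      ≤ x / Real.exp 1 := by
  have hgap := mul_le_mul_of_nonneg_left (le_diniIntegral_exp_mul_sub hηmono hDini hx)
    (Real.exp_pos 1).le
  have hpos : 0 ≤ σ + Real.exp 1 * η x := add_nonneg hσ (mul_nonneg (Real.exp_pos 1).le (hη0 x))
  have hle : σ + Real.exp 1 * η x
      ≤ σ + Real.exp 1 * (diniIntegral η (Real.exp 1 * x) - diniIntegral η x) := by linarith
  exact (hfmono hpos (hpos.trans hle) hle).trans
    (apply_add_exp_mul_le hf0 hη0 hfrc hηmono hineq hσ hfx hηx)

/-- A time after which `f ≤ c / eⁿ`, written in telescoped form: with `G = diniIntegral η` and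
`r = c / eⁿ`, the `n`-th step `e (G (e r) - G r)` dominates the step `e η r` that divides the bound
by `e`. -/
noncomputable def descentTime (η : ℝ → ℝ) (s₀ c : ℝ) (n : ℕ) : ℝ :=
  s₀ + Real.exp 1 *
    (diniIntegral η (Real.exp 1 * c) - diniIntegral η (Real.exp 1 * (c / Real.exp 1 ^ n)))

theorem le_descentTime_and_apply_descentTime_le (hf0 : ∀ s, 0 ≤ f s) (hη0 : ∀ t, 0 ≤ η t)
    (hfmono : AntitoneOn f (Ici 0)) (hfrc : ∀ s ∈ Ici (0:ℝ), ContinuousWithinAt f (Ici s) s)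
    (hηmono : MonotoneOn η (Ici 0)) (hDini : IntegrableOn (fun t => η t / t) (Ioc (0:ℝ) 1))
    (hineq : ∀ t ∈ Icc (0:ℝ) 1, ∀ s ≥ (0:ℝ), t * f (s + t) ≤ f s * η (f s))
    {s₀ : ℝ} (hs₀ : 0 ≤ s₀) (hc : 0 < f s₀) (hη : η (f s₀) ≤ 1 / Real.exp 1) (n : ℕ) :
    s₀ ≤ descentTime η s₀ (f s₀) n ∧ f (descentTime η s₀ (f s₀) n) ≤ f s₀ / Real.exp 1 ^ n := by
  set c := f s₀
  have he : 0 < Real.exp 1 := Real.exp_pos 1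
  induction n with
  | zero => simp [descentTime, c]
  | succ n ih =>
    obtain ⟨hτ, hfτ⟩ := ih
    have hsplit : descentTime η s₀ c (n + 1) = descentTime η s₀ c n + Real.exp 1 *
        (diniIntegral η (Real.exp 1 * (c / Real.exp 1 ^ n))
          - diniIntegral η (c / Real.exp 1 ^ n)) := by
      have hnext : Real.exp 1 * (c / Real.exp 1 ^ (n + 1)) = c / Real.exp 1 ^ n := by
        rw [pow_succ]; field_simp
      rw [descentTime, descentTime, hnext]; ring
    set r := c / Real.exp 1 ^ n
    have hr : 0 < r := by positivity
    have hηr : η r ≤ 1 / Real.exp 1 :=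
      (hηmono hr.le hc.le (div_le_self hc.le (one_le_pow₀ (Real.one_le_exp zero_le_one)))).trans hη
    have hlen := mul_nonneg he.le ((hη0 r).trans (le_diniIntegral_exp_mul_sub hηmono hDini hr))
    rw [hsplit, pow_succ, ← div_div]
    exact ⟨by linarith,
      apply_add_diniIntegral_le hf0 hη0 hfmono hfrc hηmono hDini hineq (hs₀.trans hτ) hr hfτ hηr⟩

theorem apply_le_div_exp_pow (hf0 : ∀ s, 0 ≤ f s) (hη0 : ∀ t, 0 ≤ η t)
    (hfmono : AntitoneOn f (Ici 0)) (hfrc : ∀ s ∈ Ici (0:ℝ), ContinuousWithinAt f (Ici s) s)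
    (hηmono : MonotoneOn η (Ici 0)) (hDini : IntegrableOn (fun t => η t / t) (Ioc (0:ℝ) 1))
    (hineq : ∀ t ∈ Icc (0:ℝ) 1, ∀ s ≥ (0:ℝ), t * f (s + t) ≤ f s * η (f s))
    {s₀ : ℝ} (hs₀ : 0 ≤ s₀) (hc : 0 < f s₀) (hη : η (f s₀) ≤ 1 / Real.exp 1)
    {s : ℝ} (hs : s₀ + Real.exp 1 * diniIntegral η (Real.exp 1 * f s₀) ≤ s) (n : ℕ) :
    f s ≤ f s₀ / Real.exp 1 ^ n := by
  obtain ⟨hτ, hfτ⟩ :=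
    le_descentTime_and_apply_descentTime_le hf0 hη0 hfmono hfrc hηmono hDini hineq hs₀ hc hη n
  have hτs : descentTime η s₀ (f s₀) n ≤ s := by
    have := mul_nonneg (Real.exp_pos 1).le
      (diniIntegral_nonneg hη0 (Real.exp 1 * (f s₀ / Real.exp 1 ^ n)))
    unfold descentTime; linarith
  exact (hfmono (hs₀.trans hτ) (hs₀.trans (hτ.trans hτs)) hτs).trans hfτ

end Iteration

theorem stmt0_general (f η : ℝ → ℝ)
    (hf0 : ∀ s, 0 ≤ f s) (hη0 : ∀ t, 0 ≤ η t)
    (hfmono : AntitoneOn f (Ici 0))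
    (hfrc : ∀ s ∈ Ici (0:ℝ), ContinuousWithinAt f (Ici s) s)
    (hηmono : MonotoneOn η (Ici 0))
    (hDini : IntegrableOn (fun t => η t / t) (Ioc (0:ℝ) 1))
    (hineq : ∀ t ∈ Icc (0:ℝ) 1, ∀ s > (0:ℝ), t * f (s + t) ≤ f s * η (f s))
    (s₀ : ℝ) (hs₀ : 0 ≤ s₀) (hη : η (f s₀) ≤ 1 / Real.exp 1) :
    ∀ s, s₀ + Real.exp 1 * (∫ t in Ioc (0:ℝ) (Real.exp 1 * f s₀), η t / t) ≤ s →
      f s = 0 := by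
  intro s hs
  rcases (hf0 s₀).eq_or_lt with hzero | hpos
  · have hs₀s : s₀ ≤ s := (le_add_of_nonneg_right
      (mul_nonneg (Real.exp_pos 1).le (diniIntegral_nonneg hη0 _))).trans hs
    exact le_antisymm (hzero ▸ hfmono hs₀ (hs₀.trans hs₀s) hs₀s) (hf0 s)
  · have hineq₀ : ∀ t ∈ Icc (0:ℝ) 1, ∀ s ≥ (0:ℝ), t * f (s + t) ≤ f s * η (f s) :=
      fun t ht s hs => mul_apply_add_le_of_nonneg hf0 hη0 hfmono hfrc hηmono hineq ht hs
    have hbound := apply_le_div_exp_pow hf0 hη0 hfmono hfrc hηmono hDini hineq₀ hs₀ hpos hη hs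
    have hlim : Tendsto (fun n : ℕ => f s₀ / Real.exp 1 ^ n) atTop (nhds 0) :=
      tendsto_const_nhds.div_atTop
        (tendsto_pow_atTop_atTop_of_one_lt (Real.one_lt_exp_iff.2 one_pos))
    exact le_antisymm (ge_of_tendsto' hlim hbound) (hf0 s)

/-- Iteration lemma (Lemma 3.3 of the paper): if `f` is nonnegative, non-increasing,
right-continuous, tends to `0` at infinity, `η` is a nonnegative non-decreasing function
satisfying the Dini condition, and `t * f (s + t) ≤ f s * η (f s)` for all `t ∈ [0,1]`,
`s > 0`, then `f` vanishes beyond `s₀ + e * ∫₀^{e f(s₀)} η(t)/t dt` whenever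
`η (f s₀) ≤ 1/e`. -/
theorem stmt0 (f η : ℝ → ℝ)
    (hf0 : ∀ s, 0 ≤ f s) (hη0 : ∀ t, 0 ≤ η t)
    (hfmono : AntitoneOn f (Ici 0))
    (hfrc : ∀ s ∈ Ici (0:ℝ), ContinuousWithinAt f (Ici s) s)
    (hflim : Tendsto f atTop (nhds 0))
    (hηmono : MonotoneOn η (Ici 0))
    (hDini : IntegrableOn (fun t => η t / t) (Ioc (0:ℝ) 1))
    (hineq : ∀ t ∈ Icc (0:ℝ) 1, ∀ s > (0:ℝ), t * f (s + t) ≤ f s * η (f s))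
    (s₀ : ℝ) (hs₀ : 0 ≤ s₀) (hη : η (f s₀) ≤ 1 / Real.exp 1) :
    ∀ s, s₀ + Real.exp 1 * (∫ t in Ioc (0:ℝ) (Real.exp 1 * f s₀), η t / t) ≤ s →
      f s = 0 :=
  stmt0_general f η hf0 hη0 hfmono hfrc hηmono hDini hineq s₀ hs₀ hη
end

section
/- Under the hypotheses of the previous iteration lemma, if moreover η(f(0)) ≤ 1/e, then f(s) = 0 for all s ≥ e·∫₀^{e·f(0)} η(t)/t dt. -/
/-!
Stepping forward from a small `s₀ > 0` by `t ≥ e·η(f s)` (possible with `t ≤ 1` because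
`e·η(f 0) ≤ 1`), the hypothesis `t·f(s+t) ≤ f(s)·η(f s)` gives `f(s+t) ≤ f(s)/e`. With step
lengths close to `e·η(f(0)/eᵏ)`, after `n` steps `f ≤ f(0)/eⁿ`, while the distance travelled is
at most `s₀ + e·∑ₖ η(f(0)/eᵏ)` plus a summable slack. Since `η` is monotone,
`η(a) ≤ ∫ₐ^{ea} η(t)/t dt`, so that sum is at most `∫₀^{e f(0)} η(t)/t dt`. Hence `f` vanishes
beyond `e·∫₀^{e f(0)} η(t)/t dt`, and at that point by right continuity.
-/

open MeasureTheory Set Filter Real intervalIntegral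

lemma intervalIntegrable_div_of_monotoneOn {η : ℝ → ℝ} {a b : ℝ} (hη : MonotoneOn η (uIcc a b))
    (h0 : (0 : ℝ) ∉ uIcc a b) : IntervalIntegrable (fun t => η t / t) volume a b := by
  simpa only [div_eq_mul_inv] using
    hη.intervalIntegrable.mul_continuousOn (continuousOn_inv₀.mono fun t ht h => h0 (h ▸ ht))

lemma intervalIntegrable_zero_div_of_monotoneOn {η : ℝ → ℝ} (hη : MonotoneOn η (Ici 0))
    (hDini : IntervalIntegrable (fun t => η t / t) volume 0 1) {M : ℝ} (hM : 0 ≤ M) :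
    IntervalIntegrable (fun t => η t / t) volume 0 M := by
  rcases le_total M 1 with hM1 | hM1
  · exact hDini.mono_set (uIcc_subset_uIcc left_mem_uIcc (mem_uIcc_of_le hM hM1))
  · refine hDini.trans (intervalIntegrable_div_of_monotoneOn (hη.mono fun t ht => ?_) ?_)
    · rw [uIcc_of_le hM1] at ht
      exact zero_le_one.trans ht.1
    · rw [uIcc_of_le hM1]
      exact fun h => absurd h.1 (by norm_num)

lemma mul_log_le_integral_div {η : ℝ → ℝ} {a b : ℝ} (hη : MonotoneOn η (Icc a b)) (ha : 0 < a)
    (hab : a ≤ b) : η a * log (b / a) ≤ ∫ t in a..b, η t / t := by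
  have h0 : (0 : ℝ) ∉ uIcc a b := by
    rw [uIcc_of_le hab]
    exact fun h => absurd h.1 ha.not_ge
  calc η a * log (b / a) = ∫ t in a..b, η a / t := by
        simp only [div_eq_mul_inv, intervalIntegral.integral_const_mul, integral_inv h0]
    _ ≤ ∫ t in a..b, η t / t := by
        refine integral_mono_on hab
          (intervalIntegrable_div_of_monotoneOn monotoneOn_const h0)
          (intervalIntegrable_div_of_monotoneOn (uIcc_of_le hab ▸ hη) h0) fun t ht => ?_
        exact div_le_div_of_nonneg_right (hη (left_mem_Icc.2 hab) ht ht.1) (ha.trans_le ht.1).le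

lemma sum_le_integral_div {η : ℝ → ℝ} (hη0 : ∀ t, 0 ≤ η t) (hη : MonotoneOn η (Ici 0)) {c : ℝ}
    (hc : 0 < c) (hint : IntervalIntegrable (fun t => η t / t) volume 0 (exp 1 * c)) (n : ℕ) :
    ∑ k ∈ Finset.range n, η (c / exp 1 ^ k) ≤ ∫ t in 0..exp 1 * c, η t / t := by
  have hint_pos : ∀ {a b : ℝ}, 0 < a → 0 < b → IntervalIntegrable (fun t => η t / t) volume a b :=
    fun ha hb => intervalIntegrable_div_of_monotoneOn
      (hη.mono fun t ht => (le_min ha.le hb.le).trans ht.1)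
      fun h => (lt_min ha hb).not_ge h.1
  have htelescope : ∀ n : ℕ, ∑ k ∈ Finset.range n, η (c / exp 1 ^ k)
      ≤ ∫ t in exp 1 * c / exp 1 ^ n..exp 1 * c, η t / t := by
    intro n
    induction n with
    | zero => simp
    | succ n ih =>
      set a := c / exp 1 ^ n
      have ha : 0 < a := by positivity
      have hshift : exp 1 * c / exp 1 ^ (n + 1) = a := by
        rw [pow_succ', ← div_div, mul_div_cancel_left₀ _ (exp_pos 1).ne']
      have hstep := mul_log_le_integral_div (hη.mono fun t ht => ha.le.trans ht.1) ha
        (le_mul_of_one_le_left ha.le (one_le_exp zero_le_one))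
      rw [mul_div_cancel_right₀ _ ha.ne', log_exp, mul_one] at hstep
      rw [mul_div_assoc] at ih
      rw [Finset.sum_range_succ, hshift, ← integral_add_adjacent_intervals
        (hint_pos ha (by positivity) : IntervalIntegrable _ _ a (exp 1 * a))
        (hint_pos (by positivity) (by positivity))]
      linarith
  refine (htelescope n).trans (integral_mono_interval (by positivity) ?_ le_rfl ?_ hint)
  · exact div_le_self (by positivity) (one_le_pow₀ (one_le_exp zero_le_one))
  · filter_upwards [ae_restrict_mem measurableSet_Ioc] with t ht
    exact div_nonneg (hη0 t) ht.1.le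

lemma le_div_exp_of_step {f η : ℝ → ℝ} (hf0 : ∀ s, 0 ≤ f s)
    (hineq : ∀ t ∈ Icc (0:ℝ) 1, ∀ s > (0:ℝ), t * f (s + t) ≤ f s * η (f s))
    {s t : ℝ} (hs : 0 < s) (ht0 : 0 < t) (ht1 : t ≤ 1) (hηt : exp 1 * η (f s) ≤ t) :
    f (s + t) ≤ f s / exp 1 := by
  have hη : η (f s) ≤ t / exp 1 := by
    rw [le_div_iff₀ (exp_pos 1)]
    linarith
  refine le_of_mul_le_mul_left ?_ ht0
  calc t * f (s + t) ≤ f s * η (f s) := hineq t ⟨ht0.le, ht1⟩ s hs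
    _ ≤ f s * (t / exp 1) := mul_le_mul_of_nonneg_left hη (hf0 s)
    _ = t * (f s / exp 1) := by ring

lemma le_div_exp_pow_of_steps {f η : ℝ → ℝ} (hf0 : ∀ s, 0 ≤ f s) (hηmono : MonotoneOn η (Ici 0))
    (hineq : ∀ t ∈ Icc (0:ℝ) 1, ∀ s > (0:ℝ), t * f (s + t) ≤ f s * η (f s))
    {s₀ c : ℝ} (hs₀ : 0 < s₀) (hc : f s₀ ≤ c) {τ : ℕ → ℝ} (hτ0 : ∀ k, 0 < τ k)
    (hτ1 : ∀ k, τ k ≤ 1) (hτ : ∀ k, exp 1 * η (c / exp 1 ^ k) ≤ τ k) (n : ℕ) :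
    f (s₀ + ∑ k ∈ Finset.range n, τ k) ≤ c / exp 1 ^ n := by
  induction n with
  | zero => simpa using hc
  | succ n ih =>
    have hs : 0 < s₀ + ∑ k ∈ Finset.range n, τ k :=
      add_pos_of_pos_of_nonneg hs₀ (Finset.sum_nonneg fun k _ => (hτ0 k).le)
    have hc0 : 0 ≤ c / exp 1 ^ n := div_nonneg ((hf0 s₀).trans hc) (by positivity)
    have hηt : exp 1 * η (f (s₀ + ∑ k ∈ Finset.range n, τ k)) ≤ τ n :=
      (mul_le_mul_of_nonneg_left (hηmono (hf0 _) hc0 ih) (exp_pos 1).le).trans (hτ n)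
    rw [Finset.sum_range_succ, ← add_assoc, pow_succ, ← div_div]
    exact (le_div_exp_of_step hf0 hineq hs (hτ0 n) (hτ1 n) hηt).trans
      (div_le_div_of_nonneg_right ih (exp_pos 1).le)

lemma eq_zero_of_sum_le {f η : ℝ → ℝ} (hf0 : ∀ s, 0 ≤ f s) (hη0 : ∀ t, 0 ≤ η t)
    (hfmono : AntitoneOn f (Ici 0)) (hηmono : MonotoneOn η (Ici 0))
    (hineq : ∀ t ∈ Icc (0:ℝ) 1, ∀ s > (0:ℝ), t * f (s + t) ≤ f s * η (f s))
    (hη : η (f 0) ≤ 1 / exp 1) {S : ℝ}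
    (hS : ∀ n, ∑ k ∈ Finset.range n, η (f 0 / exp 1 ^ k) ≤ S) {s : ℝ} (hs : exp 1 * S < s) :
    f s = 0 := by
  set ε := (s - exp 1 * S) / 2
  have hε : 0 < ε := by simp only [ε]; linarith
  -- the slack `ε / 2 * (1 / 2) ^ k` keeps the steps positive where `η` vanishes
  set τ : ℕ → ℝ := fun k => min (exp 1 * η (f 0 / exp 1 ^ k) + ε / 2 * (1 / 2) ^ k) 1
  have hτ : ∀ k, exp 1 * η (f 0 / exp 1 ^ k) ≤ τ k := by
    intro k
    have hk : η (f 0 / exp 1 ^ k) ≤ η (f 0) :=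
      hηmono (div_nonneg (hf0 0) (by positivity)) (hf0 0) (div_le_self (hf0 0) (one_le_pow₀ (one_le_exp zero_le_one)))
    refine le_min (le_add_of_nonneg_right (by positivity)) ?_
    calc exp 1 * η (f 0 / exp 1 ^ k) ≤ exp 1 * (1 / exp 1) := by gcongr; exact hk.trans hη
      _ = 1 := mul_one_div_cancel (exp_pos 1).ne'
  have hτ0 : ∀ k, 0 < τ k := fun k =>
    lt_min (add_pos_of_nonneg_of_pos (mul_nonneg (exp_pos 1).le (hη0 _)) (by positivity)) one_pos
  have hsum : ∀ n, ε + ∑ k ∈ Finset.range n, τ k ≤ s := by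
    intro n
    calc ε + ∑ k ∈ Finset.range n, τ k
        ≤ ε + ∑ k ∈ Finset.range n, (exp 1 * η (f 0 / exp 1 ^ k) + ε / 2 * (1 / 2) ^ k) := by
          gcongr with k
          exact min_le_left _ _
      _ = ε + exp 1 * ∑ k ∈ Finset.range n, η (f 0 / exp 1 ^ k)
            + ε / 2 * ∑ k ∈ Finset.range n, (1 / 2 : ℝ) ^ k := by
          rw [Finset.sum_add_distrib, ← Finset.mul_sum, ← Finset.mul_sum]; ring
      _ ≤ ε + exp 1 * S + ε / 2 * 2 := by
          gcongr
          exacts [hS n, sum_geometric_two_le n]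
      _ = s := by simp only [ε]; ring
  have hdecay : ∀ n, f s ≤ f 0 / exp 1 ^ n := by
    intro n
    have hsn : 0 ≤ ε + ∑ k ∈ Finset.range n, τ k :=
      add_nonneg hε.le (Finset.sum_nonneg fun k _ => (hτ0 k).le)
    exact (hfmono hsn (hsn.trans (hsum n)) (hsum n)).trans (le_div_exp_pow_of_steps hf0 hηmono hineq hε (hfmono self_mem_Ici hε.le hε.le) hτ0
        (fun k => min_le_right _ _) hτ n)
  have hlim : Tendsto (fun n : ℕ => f 0 / exp 1 ^ n) atTop (nhds 0) :=
    tendsto_const_nhds.div_atTop (tendsto_pow_atTop_atTop_of_one_lt (one_lt_exp_iff.2 one_pos))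
  exact le_antisymm (ge_of_tendsto' hlim hdecay) (hf0 s)

lemma eq_of_continuousWithinAt_Ici {f : ℝ → ℝ} {s c : ℝ} (hf : ContinuousWithinAt f (Ici s) s)
    (h : ∀ x > s, f x = c) : f s = c :=
  tendsto_nhds_unique (hf.mono Ioi_subset_Ici_self)
    (tendsto_const_nhds.congr' (eventually_nhdsWithin_of_forall fun x hx => (h x hx).symm))

theorem stmt1_general (f η : ℝ → ℝ)
    (hf0 : ∀ s, 0 ≤ f s) (hη0 : ∀ t, 0 ≤ η t)
    (hfmono : AntitoneOn f (Ici 0))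
    (hfrc : ∀ s ∈ Ici (0:ℝ), ContinuousWithinAt f (Ici s) s)
    (hηmono : MonotoneOn η (Ici 0))
    (hDini : IntegrableOn (fun t => η t / t) (Ioc (0:ℝ) 1))
    (hineq : ∀ t ∈ Icc (0:ℝ) 1, ∀ s > (0:ℝ), t * f (s + t) ≤ f s * η (f s))
    (hη : η (f 0) ≤ 1 / Real.exp 1) :
    ∀ s, Real.exp 1 * (∫ t in Ioc (0:ℝ) (Real.exp 1 * f 0), η t / t) ≤ s →
      f s = 0 := by
  intro s hs
  have hI : 0 ≤ ∫ t in Ioc (0:ℝ) (exp 1 * f 0), η t / t :=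
    setIntegral_nonneg measurableSet_Ioc fun t ht => div_nonneg (hη0 t) ht.1.le
  have hs0 : 0 ≤ s := (mul_nonneg (exp_pos 1).le hI).trans hs
  rcases (hf0 0).eq_or_lt with hf00 | hf00
  · exact le_antisymm ((hfmono self_mem_Ici hs0 hs0).trans hf00.ge) (hf0 s)
  have hint : IntervalIntegrable (fun t => η t / t) volume 0 (exp 1 * f 0) :=
    intervalIntegrable_zero_div_of_monotoneOn hηmono
      ((intervalIntegrable_iff_integrableOn_Ioc_of_le zero_le_one).2 hDini) (by positivity)
  have hS : ∀ n, ∑ k ∈ Finset.range n, η (f 0 / exp 1 ^ k)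
      ≤ ∫ t in Ioc (0:ℝ) (exp 1 * f 0), η t / t := fun n => by
    rw [← integral_of_le (by positivity)]
    exact sum_le_integral_div hη0 hηmono hf00 hint n
  exact eq_of_continuousWithinAt_Ici (hfrc s hs0) fun x hx =>
    eq_zero_of_sum_le hf0 hη0 hfmono hηmono hineq hη hS (hs.trans_lt hx)

/-- Remark 3.4(1): under the hypotheses of the iteration lemma, if moreover
`η (f 0) ≤ 1/e`, then `f s = 0` for all `s ≥ e * ∫₀^{e f(0)} η(t)/t dt`. -/
theorem stmt1 (f η : ℝ → ℝ)
    (hf0 : ∀ s, 0 ≤ f s) (hη0 : ∀ t, 0 ≤ η t)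
    (hfmono : AntitoneOn f (Ici 0))
    (hfrc : ∀ s ∈ Ici (0:ℝ), ContinuousWithinAt f (Ici s) s)
    (hflim : Tendsto f atTop (nhds 0))
    (hηmono : MonotoneOn η (Ici 0))
    (hDini : IntegrableOn (fun t => η t / t) (Ioc (0:ℝ) 1))
    (hineq : ∀ t ∈ Icc (0:ℝ) 1, ∀ s > (0:ℝ), t * f (s + t) ≤ f s * η (f s))
    (hη : η (f 0) ≤ 1 / Real.exp 1) :
    ∀ s, Real.exp 1 * (∫ t in Ioc (0:ℝ) (Real.exp 1 * f 0), η t / t) ≤ s →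
      f s = 0 :=
  stmt1_general f η hf0 hη0 hfmono hfrc hηmono hDini hineq hη
end
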